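/- Let H be a complex Hilbert space, let v_1, …, v_n ∈ H be linearly independent, let f ∈ H, and let (u_m)_{m≥1} be a sequence of nonzero vectors of H such that ⟨f, u_m⟩/‖u_m‖ → 0 and ⟨v_j, u_m⟩/‖u_m‖ → 0 for each j = 1, …, n, as m → ∞. Then the distance from f to the linear span of {v_1, …, v_n, u_m} converges, as m → ∞, to the distance from f to the linear span of {v_1, …, v_n}. -/

import Mathlib

open scoped ComplexInnerProductSpace

/-! Let `P` be the orthogonal projection onto the finite-dimensional space `V = span {v j}` and
`Q = 1 - P`. Any `g ∈ span {u, V}` is `c • u + a` with `a ∈ V`, so, `Q` being a contraction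
killing `V`, `‖f - g‖ ≥ ‖Q f - c • Q u‖ ≥ ‖Q f‖ - ‖⟪Q u, Q f⟫‖ / ‖Q u‖`, and `‖Q f‖` bounds the
distance from `f` to `V`. For `u` normalised, the hypotheses say that `u` tends weakly to `0` on
`V`; as `V` is finite-dimensional, `P u → 0` in norm, hence `‖Q u‖ → 1` and
`⟪Q u, Q f⟫ = ⟪u, f⟫ - ⟪u, P f⟫ → 0`. -/

open scoped InnerProductSpace
open Filter Metric Submodule Topology

section
variable {𝕜 E : Type*} [RCLike 𝕜] [NormedAddCommGroup E] [InnerProductSpace 𝕜 E]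

theorem norm_sub_starProjection_le_norm_sub {K : Submodule 𝕜 E} [K.HasOrthogonalProjection]
    (x : E) {y : E} (hy : y ∈ K) : ‖x - K.starProjection x‖ ≤ ‖x - y‖ := by
  rw [starProjection_minimal]
  exact ciInf_le ⟨0, Set.forall_mem_range.mpr fun _ => norm_nonneg _⟩ (⟨y, hy⟩ : K)

theorem norm_sub_norm_inner_div_le_norm_sub_smul (x y : E) (c : 𝕜) :
    ‖x‖ - ‖⟪y, x⟫_𝕜‖ / ‖y‖ ≤ ‖x - c • y‖ := by
  have hproj : ‖(𝕜 ∙ y).starProjection x‖ = ‖⟪y, x⟫_𝕜‖ / ‖y‖ := by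
    rcases eq_or_ne y 0 with rfl | hy
    · simp
    rw [starProjection_singleton, norm_smul, norm_div, RCLike.norm_ofReal,
      abs_of_nonneg (by positivity)]
    field_simp
  calc ‖x‖ - ‖⟪y, x⟫_𝕜‖ / ‖y‖ ≤ ‖x - (𝕜 ∙ y).starProjection x‖ := by
        rw [← hproj]; exact norm_sub_norm_le _ _
    _ ≤ ‖x - c • y‖ :=
        norm_sub_starProjection_le_norm_sub x (smul_mem _ c (mem_span_singleton_self y))

theorem infDist_sub_le_infDist_span_singleton_sup (K : Submodule 𝕜 E) [K.HasOrthogonalProjection]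
    (f u : E) :
    infDist f K - ‖⟪u, Kᗮ.starProjection f⟫_𝕜‖ / ‖Kᗮ.starProjection u‖ ≤
      infDist f ((𝕜 ∙ u) ⊔ K : Submodule 𝕜 E) := by
  set Q := Kᗮ.starProjection
  have hdist : infDist f K ≤ ‖Q f‖ := by
    simpa [Q, dist_eq_norm] using infDist_le_dist_of_mem (x := f) (K.starProjection_apply_mem f)
  have hinner : ⟪u, Q f⟫_𝕜 = ⟪Q u, Q f⟫_𝕜 := by
    rw [inner_starProjection_left_eq_right,
      starProjection_eq_self_iff.mpr (Kᗮ.starProjection_apply_mem f)]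
  rw [le_infDist ⟨0, zero_mem _⟩]
  rintro _ hg
  obtain ⟨_, hcu, a, ha, rfl⟩ := mem_sup.mp hg
  obtain ⟨c, rfl⟩ := mem_span_singleton.mp hcu
  calc infDist f K - ‖⟪u, Q f⟫_𝕜‖ / ‖Q u‖ ≤ ‖Q f‖ - ‖⟪Q u, Q f⟫_𝕜‖ / ‖Q u‖ := by
        rw [hinner]; linarith
    _ ≤ ‖Q f - c • Q u‖ := norm_sub_norm_inner_div_le_norm_sub_smul _ _ _
    _ = ‖Q (f - (c • u + a))‖ := by
        simp [Q, map_sub, map_add, map_smul, starProjection_orthogonal_apply_eq_zero ha]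
    _ ≤ dist f (c • u + a) := by rw [dist_eq_norm]; exact norm_starProjection_apply_le _ _

variable {ι : Type*} {l : Filter ι}

theorem tendsto_inner_of_mem_span {s : Set E} {e : ι → E}
    (hs : ∀ x ∈ s, Tendsto (fun i => ⟪e i, x⟫_𝕜) l (𝓝 0)) {x : E} (hx : x ∈ span 𝕜 s) :
    Tendsto (fun i => ⟪e i, x⟫_𝕜) l (𝓝 0) := by
  induction hx using span_induction with
  | mem x hx => exact hs x hx
  | zero => simpa using tendsto_const_nhds
  | add x y _ _ hx hy => simpa [inner_add_right] using hx.add hy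
  | smul c x _ hx => simpa [inner_smul_right] using hx.const_mul c

theorem tendsto_starProjection_zero_of_tendsto_inner (K : Submodule 𝕜 E) [FiniteDimensional 𝕜 K]
    {e : ι → E} (he : ∀ x ∈ K, Tendsto (fun i => ⟪e i, x⟫_𝕜) l (𝓝 0)) :
    Tendsto (fun i => K.starProjection (e i)) l (𝓝 0) := by
  set b := stdOrthonormalBasis 𝕜 K
  have hsum : ∀ i, K.starProjection (e i) = ∑ j, ⟪(b j : E), e i⟫_𝕜 • (b j : E) := by
    intro i
    simp [starProjection_apply, b.orthogonalProjectionOnto_apply_eq_sum]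
  have hcoef : ∀ j, Tendsto (fun i => ⟪(b j : E), e i⟫_𝕜) l (𝓝 0) := fun j => by
    simpa [tendsto_zero_iff_norm_tendsto_zero, norm_inner_symm] using he _ (b j).2
  simpa [hsum] using tendsto_finsetSum Finset.univ fun j _ => (hcoef j).smul_const (b j : E)

theorem tendsto_infDist_span_singleton_sup (K : Submodule 𝕜 E) [FiniteDimensional 𝕜 K] (f : E)
    {e : ι → E} (he_norm : ∀ i, ‖e i‖ = 1)
    (hK : ∀ x ∈ K, Tendsto (fun i => ⟪e i, x⟫_𝕜) l (𝓝 0))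
    (hf : Tendsto (fun i => ⟪e i, f⟫_𝕜) l (𝓝 0)) :
    Tendsto (fun i => infDist f ((𝕜 ∙ e i) ⊔ K : Submodule 𝕜 E)) l (𝓝 (infDist f K)) := by
  have hPe := tendsto_starProjection_zero_of_tendsto_inner K hK
  have hQe : Tendsto (fun i => ‖Kᗮ.starProjection (e i)‖) l (𝓝 1) := by
    rw [tendsto_iff_norm_sub_tendsto_zero]
    refine squeeze_zero_norm (fun i => ?_) (tendsto_zero_iff_norm_tendsto_zero.mp hPe)
    simpa [he_norm] using abs_norm_sub_norm_le (e i - K.starProjection (e i)) (e i)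
  have hQf : Tendsto (fun i => ⟪e i, Kᗮ.starProjection f⟫_𝕜) l (𝓝 0) := by
    simpa [inner_sub_right] using hf.sub (hK _ (K.starProjection_apply_mem f))
  have hgap : Tendsto (fun i => ‖⟪e i, Kᗮ.starProjection f⟫_𝕜‖ / ‖Kᗮ.starProjection (e i)‖) l
      (𝓝 0) := by
    simpa [Pi.div_def] using hQf.norm.div hQe one_ne_zero
  refine tendsto_of_tendsto_of_tendsto_of_le_of_le (by simpa using tendsto_const_nhds.sub hgap)
    tendsto_const_nhds (fun i => infDist_sub_le_infDist_span_singleton_sup K f (e i)) fun i => ?_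
  exact infDist_le_infDist_of_subset (SetLike.coe_subset_coe.mpr le_sup_right) ⟨0, K.zero_mem⟩

end

theorem stmt4 {H : Type*} [NormedAddCommGroup H] [InnerProductSpace ℂ H]
    (n : ℕ) (v : Fin n → H) (f : H)
    (u : ℕ → H) (hu : ∀ m, u m ≠ 0)
    (hf0 : Filter.Tendsto (fun m => ⟪u m, f⟫ / (‖u m‖ : ℂ)) Filter.atTop (nhds 0))
    (hv0 : ∀ j : Fin n,
      Filter.Tendsto (fun m => ⟪u m, v j⟫ / (‖u m‖ : ℂ)) Filter.atTop (nhds 0)) :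
    Filter.Tendsto
      (fun m => Metric.infDist f
        (Submodule.span ℂ (insert (u m) (Set.range v)) : Set H))
      Filter.atTop
      (nhds (Metric.infDist f (Submodule.span ℂ (Set.range v) : Set H))) := by
  set e : ℕ → H := fun m => (‖u m‖⁻¹ : ℂ) • u m
  have he_inner : ∀ m x, ⟪e m, x⟫ = ⟪u m, x⟫ / (‖u m‖ : ℂ) := fun m x => by
    simp [e, div_eq_mul_inv]
  have hspan : ∀ m, span ℂ (insert (u m) (Set.range v)) = (ℂ ∙ e m) ⊔ span ℂ (Set.range v) :=
    fun m => by
      rw [span_insert, span_singleton_smul_eq (by simpa using hu m)]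
  have : FiniteDimensional ℂ (span ℂ (Set.range v)) :=
    FiniteDimensional.span_of_finite ℂ (Set.finite_range v)
  simp_rw [hspan]
  exact tendsto_infDist_span_singleton_sup _ f (fun m => norm_smul_inv_norm (hu m))
    (fun x hx => tendsto_inner_of_mem_span (by simpa [he_inner] using hv0) hx)
    (by simpa [he_inner] using hf0)
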